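/- Let ω = e^{2πi/3} and A₀ = diag(1, ω, ω²) ∈ gl(3,ℂ), a complex symmetric traceless matrix. Consider the action of U(1) × SO(3) on such matrices given by (e^{iφ}, R) · A = e^{iφ} R A R⁻¹. Then the stabilizer of A₀ consists of exactly the 12 elements (1, diag(ε₁,ε₂,ε₃)), (ω, P) with P the signed cyclic permutation matrix sending (x₁,x₂,x₃) to (ε₁x₃, ε₂x₁, ε₃x₂), and (ω², Q) with Q the signed cyclic permutation matrix sending (x₁,x₂,x₃) to (ε₁x₂, ε₂x₃, ε₃x₁), where in each case ε₁, ε₂, ε₃ ∈ {±1} and ε₁ε₂ε₃ = 1; moreover this stabilizer is isomorphic, as a group, to the alternating group on 4 letters. -/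

import Mathlib

open Matrix

noncomputable section

abbrev M3R : Type := Matrix (Fin 3) (Fin 3) ℝ
abbrev M3C : Type := Matrix (Fin 3) (Fin 3) ℂ

def isSO3 (R : M3R) : Prop := R * Rᵀ = 1 ∧ R.det = 1

def toC (R : M3R) : M3C := R.map (fun x => (x : ℂ))

/-- `ω = e^{2πi/3}`. -/
def ω : ℂ := Complex.exp (2 * Real.pi * Complex.I / 3)

/-- `A₀ = diag(1, ω, ω²)`. -/
def A0 : M3C := !![1, 0, 0; 0, ω, 0; 0, 0, ω ^ 2]

/-- The stabilizer of `A₀` in `U(1) × SO(3)` for the action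
`(e^{iφ}, R) · A = e^{iφ} R A R⁻¹`. -/
def Stab : Set (ℂ × M3R) :=
  {g | (‖g.1‖ = 1 ∧ isSO3 g.2) ∧ g.1 • (toC g.2 * A0 * (toC g.2)⁻¹) = A0}

/-!
Writing `A₀ = diag(ω^i)`, the relation `c R A₀ = A₀ R` says `c ω^j = ω^i` whenever `R i j ≠ 0`.
As `ω` is a primitive cube root of unity and no row of the orthogonal matrix `R` vanishes, this
forces `c = ω^k` and `R` to be supported on `i = j + k (mod 3)`: `R` is a signed cyclic permutation
matrix, orthogonality makes its signs `±1` and `det R = 1` makes their product `1`. These elements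
multiply like the semidirect product `(ℤ/2)² ⋊ ℤ/3`, and their action on the four vertices of the
tetrahedron `{x ∈ {±1}³ | x₁x₂x₃ = 1}` identifies them with `A₄`.
-/

open Equiv

lemma isPrimitiveRoot_ω : IsPrimitiveRoot ω 3 := by
  simpa [ω] using Complex.isPrimitiveRoot_exp 3 (by norm_num)

def ωPow (i : Fin 3) : ℂ := ω ^ (i : ℕ)

lemma ωPow_add (i j : Fin 3) : ωPow (i + j) = ωPow i * ωPow j := by
  rw [ωPow, ωPow, ωPow, Fin.val_add, ← pow_add]
  conv_rhs => rw [← Nat.mod_add_div (i + j : ℕ) 3, pow_add, pow_mul,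
    isPrimitiveRoot_ω.pow_eq_one, one_pow, mul_one]

lemma ωPow_injective : Function.Injective ωPow :=
  fun i j h => Fin.ext (isPrimitiveRoot_ω.pow_inj i.isLt j.isLt h)

lemma ωPow_ne_zero (i : Fin 3) : ωPow i ≠ 0 :=
  pow_ne_zero _ (isPrimitiveRoot_ω.ne_zero (by norm_num))

lemma norm_ωPow (i : Fin 3) : ‖ωPow i‖ = 1 := by
  rw [ωPow, norm_pow, isPrimitiveRoot_ω.norm'_eq_one (by norm_num), one_pow]

lemma A0_eq_diagonal : A0 = diagonal ωPow := by
  ext i j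
  fin_cases i <;> fin_cases j <;> simp [A0, ωPow]

lemma det_toC (R : M3R) : (toC R).det = R.det :=
  (Complex.ofRealHom.map_det R).symm

lemma smul_conj_eq_iff {n R : Type*} [Fintype n] [DecidableEq n] [CommRing R]
    {P A : Matrix n n R} (hP : IsUnit P.det) (c : R) :
    c • (P * A * P⁻¹) = A ↔ c • (P * A) = A * P := by
  constructor
  · intro h
    calc c • (P * A) = c • (P * A * P⁻¹) * P := by
          rw [smul_mul, nonsing_inv_mul_cancel_right P _ hP]
      _ = A * P := by rw [h]
  · intro h
    calc c • (P * A * P⁻¹) = c • (P * A) * P⁻¹ := by rw [smul_mul]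
      _ = A := by rw [h, mul_nonsing_inv_cancel_right P A hP]

lemma smul_mul_diagonal_eq_iff {n R : Type*} [Fintype n] [DecidableEq n] [CommRing R]
    [NoZeroDivisors R] (c : R) (d : n → R) (M : Matrix n n R) :
    c • (M * diagonal d) = diagonal d * M ↔ ∀ i j, M i j ≠ 0 → c * d j = d i := by
  simp only [← Matrix.ext_iff, Matrix.smul_apply, mul_diagonal, diagonal_mul, smul_eq_mul]
  refine forall₂_congr fun i j => ?_
  rw [← or_iff_not_imp_left, or_comm, ← mul_eq_mul_left_iff]
  constructor <;> intro h <;> linear_combination h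

lemma exists_ne_zero_of_mul_transpose_eq_one {n R : Type*} [Fintype n] [DecidableEq n]
    [Semiring R] [Nontrivial R] {M : Matrix n n R} (h : M * Mᵀ = 1) (i : n) :
    ∃ j, M i j ≠ 0 := by
  by_contra! hrow
  simpa [mul_apply, hrow] using congrFun (congrFun h i) i

section SignedCyclic

variable {G R : Type*} [AddCommGroup G] [DecidableEq G]

def signedCyclic [Zero R] (k : G) (ε : G → R) : Matrix G G R :=
  of fun i j => if i = j + k then ε i else 0

lemma signedCyclic_apply [Zero R] (k : G) (ε : G → R) (i j : G) :
    signedCyclic k ε i j = if i = j + k then ε i else 0 :=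
  rfl

lemma signedCyclic_apply_sub [Zero R] (k : G) (ε : G → R) (i : G) :
    signedCyclic k ε i (i - k) = ε i := by
  simp [signedCyclic_apply]

lemma signedCyclic_apply_of_ne [Zero R] {k : G} (ε : G → R) {i m : G} (hm : m ≠ i - k) :
    signedCyclic k ε i m = 0 :=
  if_neg fun h => hm (eq_sub_of_add_eq h.symm)

lemma eq_add_of_signedCyclic_apply_ne_zero [Zero R] {k : G} {ε : G → R} {i j : G}
    (h : signedCyclic k ε i j ≠ 0) : i = j + k :=
  by_contra fun hij => h (if_neg hij)

lemma eq_signedCyclic_of_support [Zero R] {k : G} {M : Matrix G G R}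
    (h : ∀ i j, M i j ≠ 0 → i = j + k) : M = signedCyclic k (fun i => M i (i - k)) := by
  ext i j
  by_cases hij : i = j + k
  · simp [signedCyclic_apply, hij]
  · rw [signedCyclic_apply, if_neg hij]
    exact not_not.mp (mt (h i j) hij)

variable [Fintype G]

lemma signedCyclic_mul [NonUnitalNonAssocSemiring R] (k l : G) (ε η : G → R) :
    signedCyclic k ε * signedCyclic l η = signedCyclic (k + l) (fun i => ε i * η (i - k)) := by
  ext i j
  rw [mul_apply, Finset.sum_eq_single (i - k)
    (fun m _ hm => by rw [signedCyclic_apply_of_ne ε hm, zero_mul]) (by simp)]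
  simp [signedCyclic_apply, sub_eq_iff_eq_add, add_assoc, add_comm l]

lemma signedCyclic_mul_transpose [NonUnitalNonAssocSemiring R] (k : G) (ε : G → R) :
    signedCyclic k ε * (signedCyclic k ε)ᵀ = diagonal fun i => ε i * ε i := by
  ext i i'
  rw [mul_apply, Finset.sum_eq_single (i - k)
    (fun m _ hm => by rw [signedCyclic_apply_of_ne ε hm, zero_mul]) (by simp)]
  by_cases h : i = i'
  · simp [signedCyclic_apply, h]
  · simp [signedCyclic_apply, h, Ne.symm h]

end SignedCyclic

lemma det_signedCyclic_fin_three {R : Type*} [CommRing R] (k : Fin 3) (ε : Fin 3 → R) :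
    (signedCyclic k ε).det = ∏ i, ε i := by
  fin_cases k <;> simp [det_fin_three, signedCyclic, Fin.prod_univ_three]

lemma smul_conj_A0_eq_iff {c : ℂ} {R : M3R} (hR : R.det = 1) :
    c • (toC R * A0 * (toC R)⁻¹) = A0 ↔ ∀ i j, R i j ≠ 0 → c * ωPow j = ωPow i := by
  rw [smul_conj_eq_iff (by simp [det_toC, hR]), A0_eq_diagonal, smul_mul_diagonal_eq_iff]
  simp [toC]

lemma exists_eq_signedCyclic {c : ℂ} {R : M3R} (hR : R * Rᵀ = 1)
    (h : ∀ i j, R i j ≠ 0 → c * ωPow j = ωPow i) :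
    ∃ k, c = ωPow k ∧ R = signedCyclic k (fun i => R i (i - k)) := by
  obtain ⟨j₀, hj₀⟩ := exists_ne_zero_of_mul_transpose_eq_one hR 0
  have hc : c = ωPow (-j₀) := mul_right_cancel₀ (ωPow_ne_zero j₀) <| by
    rw [h 0 j₀ hj₀, ← ωPow_add, neg_add_cancel]
  refine ⟨-j₀, hc, eq_signedCyclic_of_support fun i j hij => ωPow_injective ?_⟩
  rw [ωPow_add, ← hc, mul_comm, h i j hij]

def stabElem (k : Fin 3) (ε : Fin 3 → ℝ) : ℂ × M3R := (ωPow k, signedCyclic k ε)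

lemma mem_Stab_iff {g : ℂ × M3R} :
    g ∈ Stab ↔ ∃ k ε, (∀ i, ε i = 1 ∨ ε i = -1) ∧ ∏ i, ε i = 1 ∧ g = stabElem k ε := by
  constructor
  · obtain ⟨c, R⟩ := g
    rintro ⟨⟨-, hRRt, hdet⟩, hconj⟩
    obtain ⟨k, rfl, hR⟩ := exists_eq_signedCyclic hRRt ((smul_conj_A0_eq_iff hdet).1 hconj)
    set ε := fun i => R i (i - k)
    rw [hR, signedCyclic_mul_transpose, ← diagonal_one] at hRRt
    rw [hR, det_signedCyclic_fin_three] at hdet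
    exact ⟨k, ε, fun i => mul_self_eq_one_iff.1 (congrFun (diagonal_injective hRRt) i), hdet,
      Prod.ext rfl hR⟩
  · rintro ⟨k, ε, hε, hprod, rfl⟩
    dsimp only [stabElem]
    have hdet : (signedCyclic k ε).det = 1 := (det_signedCyclic_fin_three k ε).trans hprod
    refine ⟨⟨norm_ωPow k, ?_, hdet⟩, (smul_conj_A0_eq_iff hdet).2 fun i j hij => ?_⟩
    · rw [signedCyclic_mul_transpose, ← diagonal_one]
      exact congrArg diagonal (funext fun i => mul_self_eq_one_iff.2 (hε i))
    · rw [eq_add_of_signedCyclic_apply_ne_zero hij, ωPow_add, mul_comm]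

lemma stabElem_mul (k l : Fin 3) (ε η : Fin 3 → ℝ) :
    stabElem k ε * stabElem l η = stabElem (k + l) (fun i => ε i * η (i - k)) :=
  Prod.ext (ωPow_add k l).symm (signedCyclic_mul k l ε η)

lemma stabElem_injective {k l : Fin 3} {ε η : Fin 3 → ℝ} (h : stabElem k ε = stabElem l η) :
    k = l ∧ ε = η := by
  obtain rfl : k = l := ωPow_injective (congrArg Prod.fst h)
  refine ⟨rfl, funext fun i => ?_⟩
  rw [← signedCyclic_apply_sub k ε i, ← signedCyclic_apply_sub k η i]
  exact congrFun (congrFun (congrArg Prod.snd h) i) (i - k)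

section SignVec

variable {ι : Type*}

def signVec (δ : ι → ℤˣ) : ι → ℝ := fun i => ((δ i : ℤ) : ℝ)

lemma signVec_injective : Function.Injective (signVec (ι := ι)) := fun _ _ h =>
  funext fun i => Units.ext (Int.cast_injective (congrFun h i))

lemma signVec_apply_eq_one_or (δ : ι → ℤˣ) (i : ι) : signVec δ i = 1 ∨ signVec δ i = -1 := by
  rcases Int.units_eq_one_or (δ i) with h | h <;> simp [signVec, h]

lemma exists_signVec_eq {ε : ι → ℝ} (hε : ∀ i, ε i = 1 ∨ ε i = -1) : ∃ δ, signVec δ = ε := by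
  refine ⟨fun i => if ε i = 1 then 1 else -1, funext fun i => ?_⟩
  rcases hε i with h | h <;> norm_num [signVec, h]

lemma prod_signVec_eq_one_iff [Fintype ι] (δ : ι → ℤˣ) : ∏ i, signVec δ i = 1 ↔ ∏ i, δ i = 1 := by
  simp only [signVec]
  rw [← Int.cast_prod, ← Units.coe_prod]
  rcases Int.units_eq_one_or (∏ i, δ i) with h | h <;> norm_num [h]

end SignVec

lemma mem_Stab_iff_signVec {g : ℂ × M3R} :
    g ∈ Stab ↔ ∃ k δ, ∏ i, δ i = 1 ∧ g = stabElem k (signVec δ) := by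
  rw [mem_Stab_iff]
  constructor
  · rintro ⟨k, ε, hε, hprod, rfl⟩
    obtain ⟨δ, rfl⟩ := exists_signVec_eq hε
    exact ⟨k, δ, (prod_signVec_eq_one_iff δ).1 hprod, rfl⟩
  · rintro ⟨k, δ, hδ, rfl⟩
    exact ⟨k, _, signVec_apply_eq_one_or δ, (prod_signVec_eq_one_iff δ).2 hδ, rfl⟩

/-- On the vertices `v₀ = (1,1,1)`, `v₁ = (1,-1,-1)`, `v₂ = (-1,1,-1)`, `v₃ = (-1,-1,1)` of the
tetrahedron `x₁x₂x₃ = 1` in `{±1}³`, `kleinPerm δ` is `x ↦ δ x` and `cycPerm` is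
`(x₁, x₂, x₃) ↦ (x₃, x₁, x₂)`, so `tetraPerm k δ` is the action of `stabElem k (signVec δ)`. -/
def kleinPerm (δ : Fin 3 → ℤˣ) : Perm (Fin 4) :=
  if δ 0 = 1 then (if δ 1 = 1 then 1 else swap 0 1 * swap 2 3)
  else (if δ 1 = 1 then swap 0 2 * swap 1 3 else swap 0 3 * swap 1 2)

def cycPerm : Perm (Fin 4) := swap 1 3 * swap 1 2

def tetraPerm (k : Fin 3) (δ : Fin 3 → ℤˣ) : Perm (Fin 4) := kleinPerm δ * cycPerm ^ (k : ℕ)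

lemma tetraPerm_mul : ∀ (k l : Fin 3) (δ η : Fin 3 → ℤˣ), ∏ i, δ i = 1 → ∏ i, η i = 1 →
    tetraPerm (k + l) (fun i => δ i * η (i - k)) = tetraPerm k δ * tetraPerm l η := by
  decide +kernel

lemma tetraPerm_mem_alternatingGroup :
    ∀ (k : Fin 3) (δ : Fin 3 → ℤˣ), tetraPerm k δ ∈ alternatingGroup (Fin 4) := by
  simp only [Perm.mem_alternatingGroup]
  decide +kernel

lemma tetraPerm_injective : ∀ (k l : Fin 3) (δ η : Fin 3 → ℤˣ), ∏ i, δ i = 1 → ∏ i, η i = 1 →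
    tetraPerm k δ = tetraPerm l η → k = l ∧ δ = η := by
  decide +kernel

lemma tetraPerm_surjective : ∀ σ ∈ alternatingGroup (Fin 4),
    ∃ (k : Fin 3) (δ : Fin 3 → ℤˣ), ∏ i, δ i = 1 ∧ tetraPerm k δ = σ := by
  simp only [Perm.mem_alternatingGroup]
  decide +kernel

theorem exists_bijective_mul_Stab_to_alternatingGroup :
    ∃ f : ↥Stab → ↥(alternatingGroup (Fin 4)),
      Function.Bijective f ∧ ∀ a b c : ↥Stab, c.val = a.val * b.val → f c = f a * f b := by
  choose k δ hδ hg using fun g : Stab => mem_Stab_iff_signVec.1 g.2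
  refine ⟨fun g => ⟨tetraPerm (k g) (δ g), tetraPerm_mem_alternatingGroup _ _⟩,
    ⟨fun g g' h => ?_, fun σ => ?_⟩, fun a b c hc => ?_⟩
  · obtain ⟨hk, hδ'⟩ := tetraPerm_injective _ _ _ _ (hδ g) (hδ g') (congrArg Subtype.val h)
    exact Subtype.ext (by rw [hg g, hg g', hk, hδ'])
  · obtain ⟨l, η, hη, hσ⟩ := tetraPerm_surjective σ σ.2
    let g : Stab := ⟨stabElem l (signVec η), mem_Stab_iff_signVec.2 ⟨l, η, hη, rfl⟩⟩
    obtain ⟨hk, hε⟩ := stabElem_injective (hg g).symm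
    refine ⟨g, Subtype.ext ?_⟩
    simp only [hk, signVec_injective hε, hσ]
  · have hprod : stabElem (k c) (signVec (δ c)) =
        stabElem (k a + k b) (signVec fun i => δ a i * δ b (i - k a)) := by
      rw [← hg c, hc, hg a, hg b, stabElem_mul]
      congr 1
      ext i
      simp [signVec]
    obtain ⟨hk, hε⟩ := stabElem_injective hprod
    exact Subtype.ext ((congrArg₂ tetraPerm hk (signVec_injective hε)).trans
      (tetraPerm_mul _ _ _ _ (hδ a) (hδ b)))

lemma stabElem_zero (ε : Fin 3 → ℝ) :
    stabElem 0 ε = (1, !![ε 0, 0, 0; 0, ε 1, 0; 0, 0, ε 2]) := by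
  refine Prod.ext (by simp [stabElem, ωPow]) ?_
  ext i j
  fin_cases i <;> fin_cases j <;> simp [stabElem, signedCyclic_apply]

lemma stabElem_one (ε : Fin 3 → ℝ) :
    stabElem 1 ε = (ω, !![0, 0, ε 0; ε 1, 0, 0; 0, ε 2, 0]) := by
  refine Prod.ext (by simp [stabElem, ωPow]) ?_
  ext i j
  fin_cases i <;> fin_cases j <;> simp [stabElem, signedCyclic_apply]

lemma stabElem_two (ε : Fin 3 → ℝ) :
    stabElem 2 ε = (ω ^ 2, !![0, ε 0, 0; 0, 0, ε 1; ε 2, 0, 0]) := by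
  refine Prod.ext (by simp [stabElem, ωPow]) ?_
  ext i j
  fin_cases i <;> fin_cases j <;> simp [stabElem, signedCyclic_apply]

/-- The stabilizer of `A₀ = diag(1, ω, ω²)` consists of exactly the 12 signed
(cyclic) permutation elements with `ε₁ε₂ε₃ = 1`, and it is isomorphic, as a group,
to the alternating group on 4 letters. -/
theorem stabilizer_Omega4_phase :
    Stab =
      {g : ℂ × M3R | ∃ ε₁ ε₂ ε₃ : ℝ,
        (ε₁ = 1 ∨ ε₁ = -1) ∧ (ε₂ = 1 ∨ ε₂ = -1) ∧ (ε₃ = 1 ∨ ε₃ = -1) ∧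
        ε₁ * ε₂ * ε₃ = 1 ∧
        (g = (1, !![ε₁, 0, 0; 0, ε₂, 0; 0, 0, ε₃]) ∨
         g = (ω, !![0, 0, ε₁; ε₂, 0, 0; 0, ε₃, 0]) ∨
         g = (ω ^ 2, !![0, ε₁, 0; 0, 0, ε₂; ε₃, 0, 0]))} ∧
    ∃ f : ↥Stab → ↥(alternatingGroup (Fin 4)),
      Function.Bijective f ∧
        ∀ a b c : ↥Stab, c.val = a.val * b.val → f c = f a * f b := by
  refine ⟨Set.ext fun g => mem_Stab_iff.trans ⟨?_, ?_⟩,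
    exists_bijective_mul_Stab_to_alternatingGroup⟩
  · rintro ⟨k, ε, hε, hprod, rfl⟩
    refine ⟨ε 0, ε 1, ε 2, hε 0, hε 1, hε 2, by simpa [Fin.prod_univ_three] using hprod, ?_⟩
    fin_cases k
    exacts [Or.inl (stabElem_zero ε), Or.inr (Or.inl (stabElem_one ε)),
      Or.inr (Or.inr (stabElem_two ε))]
  · rintro ⟨ε₁, ε₂, ε₃, h₁, h₂, h₃, hprod, hg⟩
    have hε : ∀ i, ![ε₁, ε₂, ε₃] i = 1 ∨ ![ε₁, ε₂, ε₃] i = -1 := by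
      intro i; fin_cases i <;> assumption
    have hprod' : ∏ i, ![ε₁, ε₂, ε₃] i = 1 := by simpa [Fin.prod_univ_three] using hprod
    rcases hg with rfl | rfl | rfl
    exacts [⟨0, _, hε, hprod', (stabElem_zero ![ε₁, ε₂, ε₃]).symm⟩,
      ⟨1, _, hε, hprod', (stabElem_one ![ε₁, ε₂, ε₃]).symm⟩,
      ⟨2, _, hε, hprod', (stabElem_two ![ε₁, ε₂, ε₃]).symm⟩]
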